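/- arXiv:math/0611097 — 2 statements merged into one kernel-verified Lean document; each statement's English description precedes it below -/
import Mathlib

section
/- Closability transfers from module derivation to algebra derivation: let E be a full Hilbert B-module and δ a densely defined d-derivation of E (δ(xb) = δ(x)b + x d(b)). If δ is closable (as an unbounded operator on the Banach space E), then d is closable (as an unbounded operator on B). -/
open scoped RightActions
open Filter Topology

/-- The Hilbert C⋆-module class as Mathlib (December 2024) defined it: right `A`-action
`SMul Aᵐᵒᵖ E`, with `⟪x, y <• a⟫ = ⟪x, y⟫ * a`. -/
class CStarModuleRight (A E : Type*) [NonUnitalSemiring A] [StarRing A] [Module ℂ A]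
    [AddCommGroup E] [Module ℂ E] [PartialOrder A] [SMul Aᵐᵒᵖ E] [Norm A] [Norm E]
    extends Inner A E where
  inner_add_right {x} {y} {z} : inner x (y + z) = inner x y + inner x z
  inner_self_nonneg {x} : 0 ≤ inner x x
  inner_self {x} : inner x x = 0 ↔ x = 0
  inner_op_smul_right {a : A} {x y : E} : inner x (y <• a) = inner x y * a
  inner_smul_right_complex {z : ℂ} {x} {y} : inner x (z • y) = z • inner x y
  star_inner x y : star (inner x y) = inner y x
  norm_eq_sqrt_norm_inner_self x : ‖x‖ = √‖inner x x‖

/-! Let `b n → 0` with `d (b n) → c`. For `x ∈ dom δ` the derivation rule gives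
`δ (x b n) = δ x · b n + x · d (b n) → x c` while `x b n → 0`, so closability of `δ` forces
`x c = 0`. Since `z ↦ z c` is continuous and `dom δ` is dense, `z c = 0` for every `z`, hence
`⟪y, z⟫ c = ⟪y, z c⟫ = 0`. Right multiplication by `c` thus kills a dense subspace of `B`
(fullness), in particular `c⋆ c = 0`, so `c = 0`. -/

namespace CStarModuleRight

section Algebraic

variable {A E : Type*} [NonUnitalRing A] [StarRing A] [Module ℂ A] [PartialOrder A] [Norm A]
  [AddCommGroup E] [Module ℂ E] [SMul Aᵐᵒᵖ E] [Norm E] [CStarModuleRight A E]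

def innerRightAddHom (y : E) : E →+ A :=
  AddMonoidHom.mk' (fun z => inner A y z) fun _ _ => inner_add_right

theorem inner_zero_right (y : E) : inner A y (0 : E) = 0 :=
  map_zero (innerRightAddHom y)

theorem inner_sub_right (y z w : E) : inner A y (z - w) = inner A y z - inner A y w :=
  map_sub (innerRightAddHom y) z w

theorem inner_op_smul_left (x y : E) (a : A) : inner A (x <• a) y = star a * inner A x y := by
  rw [← star_inner y, inner_op_smul_right, star_mul, star_inner]

theorem ext_inner_left {z : E} (h : ∀ y : E, inner A y z = 0) : z = 0 :=
  inner_self.mp (h z)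

theorem op_smul_add (x : E) (a a' : A) : x <• (a + a') = x <• a + x <• a' := by
  refine sub_eq_zero.mp (ext_inner_left (A := A) fun y => ?_)
  simp only [inner_sub_right, inner_add_right, inner_op_smul_right, mul_add, sub_self]

theorem add_op_smul (z z' : E) (a : A) : (z + z') <• a = z <• a + z' <• a := by
  refine sub_eq_zero.mp (ext_inner_left (A := A) fun y => ?_)
  simp only [inner_sub_right, inner_add_right, inner_op_smul_right, add_mul, sub_self]

theorem op_smul_zero (x : E) : x <• (0 : A) = 0 :=
  ext_inner_left (A := A) fun y => by rw [inner_op_smul_right, mul_zero]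

end Algebraic

section Analytic

variable {A E : Type*} [NonUnitalNormedRing A] [StarRing A] [Module ℂ A] [PartialOrder A]
  [SeminormedAddCommGroup E] [Module ℂ E] [SMul Aᵐᵒᵖ E] [CStarModuleRight A E]

theorem norm_sq_eq_norm_inner_self (x : E) : ‖x‖ ^ 2 = ‖inner A x x‖ := by
  rw [norm_eq_sqrt_norm_inner_self (A := A) x, Real.sq_sqrt (norm_nonneg _)]

variable [NormedStarGroup A]

theorem norm_op_smul_le (x : E) (a : A) : ‖x <• a‖ ≤ ‖x‖ * ‖a‖ := by
  have hinner : ‖inner A (x <• a) (x <• a)‖ ≤ (‖x‖ * ‖a‖) ^ 2 :=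
    calc ‖inner A (x <• a) (x <• a)‖ = ‖star a * inner A x x * a‖ := by
          rw [inner_op_smul_right, inner_op_smul_left]
      _ ≤ ‖star a‖ * ‖inner A x x‖ * ‖a‖ := norm_mul₃_le
      _ = (‖x‖ * ‖a‖) ^ 2 := by rw [norm_star, ← norm_sq_eq_norm_inner_self]; ring
  rw [norm_eq_sqrt_norm_inner_self (A := A)]
  exact Real.sqrt_le_left (by positivity) |>.mpr hinner

theorem continuous_op_smul_const (x : E) : Continuous fun a : A => x <• a :=
  AddMonoidHomClass.continuous_of_bound (AddMonoidHom.mk' (fun a : A => x <• a) (op_smul_add x))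
    ‖x‖ (norm_op_smul_le x)

theorem continuous_const_op_smul (a : A) : Continuous fun z : E => z <• a :=
  AddMonoidHomClass.continuous_of_bound
    (AddMonoidHom.mk' (fun z : E => z <• a) (add_op_smul · · a)) ‖a‖
    fun z => (norm_op_smul_le z a).trans_eq (mul_comm _ _)

end Analytic

end CStarModuleRight

open CStarModuleRight

section Closability

variable {B E : Type*} [NonUnitalCStarAlgebra B] [PartialOrder B]
  [NormedAddCommGroup E] [NormedSpace ℂ E] [SMul Bᵐᵒᵖ E] [CStarModuleRight B E]

theorem op_smul_eq_zero_of_closable (D : Submodule ℂ E) (δ : D → E)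
    (B₀ : NonUnitalSubalgebra ℂ B) (d : B₀ → B)
    (hmod : ∀ (x : D) (b : B₀), (x : E) <• (b : B) ∈ D)
    (hder : ∀ (x : D) (b : B₀),
      δ ⟨(x : E) <• (b : B), hmod x b⟩ = δ x <• (b : B) + (x : E) <• d b)
    (hclos : ∀ (x : ℕ → D) (e : E),
      Tendsto (fun n => (x n : E)) atTop (𝓝 0) →
      Tendsto (fun n => δ (x n)) atTop (𝓝 e) → e = 0)
    {b : ℕ → B₀} {c : B} (hb : Tendsto (fun n => (b n : B)) atTop (𝓝 0))
    (hc : Tendsto (fun n => d (b n)) atTop (𝓝 c)) (x : D) : (x : E) <• c = 0 := by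
  have hsmul : ∀ z : E, Tendsto (fun n => z <• (b n : B)) atTop (𝓝 0) := fun z => by
    rw [← op_smul_zero (A := B) z]
    exact ((continuous_op_smul_const z).tendsto 0).comp hb
  have hδ : Tendsto (fun n => δ x <• (b n : B) + (x : E) <• d (b n)) atTop
      (𝓝 (0 + (x : E) <• c)) :=
    (hsmul (δ x)).add (((continuous_op_smul_const (x : E)).tendsto c).comp hc)
  rw [zero_add] at hδ
  exact hclos (fun n => ⟨(x : E) <• (b n : B), hmod x (b n)⟩) _ (hsmul x)
    (hδ.congr fun n => (hder x (b n)).symm)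

theorem eq_zero_of_inner_mul_eq_zero
    (hfull : (Submodule.span ℂ {b : B | ∃ x y : E, (inner B x y : B) = b}).topologicalClosure = ⊤)
    {c : B} (h : ∀ x y : E, inner B x y * c = 0) : c = 0 := by
  let mulRight := (ContinuousLinearMap.mul ℂ B).flip c
  have hspan :
      Submodule.span ℂ {b : B | ∃ x y : E, (inner B x y : B) = b} ≤ mulRight.ker := by
    rw [Submodule.span_le]
    rintro _ ⟨x, y, rfl⟩
    exact h x y
  have htop : (⊤ : Submodule ℂ B) ≤ mulRight.ker :=
    hfull ▸ Submodule.topologicalClosure_minimal _ hspan mulRight.isClosed_ker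
  exact (CStarRing.star_mul_self_eq_zero_iff c).mp (htop Submodule.mem_top)

end Closability

theorem stmt12_general {B E : Type*}
    [NonUnitalCStarAlgebra B] [PartialOrder B]
    [NormedAddCommGroup E] [NormedSpace ℂ E] [SMul Bᵐᵒᵖ E] [CStarModuleRight B E]
    (hfull : (Submodule.span ℂ {b : B | ∃ x y : E, (inner B x y : B) = b}).topologicalClosure = ⊤)
    (D : Submodule ℂ E) (hdense : Dense (D : Set E)) (δ : D →ₗ[ℂ] E)
    (B₀ : NonUnitalSubalgebra ℂ B) (d : B₀ →ₗ[ℂ] B)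
    (hmod : ∀ (x : D) (b : B₀), (x : E) <• (b : B) ∈ D)
    (hder : ∀ (x : D) (b : B₀),
      δ ⟨(x : E) <• (b : B), hmod x b⟩ = δ x <• (b : B) + (x : E) <• d b)
    (hclos : ∀ (x : ℕ → D) (e : E),
      Tendsto (fun n => (x n : E)) atTop (𝓝 0) →
      Tendsto (fun n => δ (x n)) atTop (𝓝 e) → e = 0) :
    ∀ (b : ℕ → B₀) (c : B),
      Tendsto (fun n => (b n : B)) atTop (𝓝 0) →
      Tendsto (fun n => d (b n)) atTop (𝓝 c) → c = 0 := by
  intro b c hb hc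
  have hD : ∀ x : D, (x : E) <• c = 0 :=
    op_smul_eq_zero_of_closable D δ B₀ d hmod hder hclos hb hc
  have hE : (fun z : E => z <• c) = fun _ => 0 :=
    (continuous_const_op_smul c).ext_on hdense continuous_const fun z hz => hD ⟨z, hz⟩
  refine eq_zero_of_inner_mul_eq_zero hfull fun x y => ?_
  rw [← inner_op_smul_right, congrFun hE y, CStarModuleRight.inner_zero_right]

/-- Closability transfers from the module derivation `δ` to the algebra derivation `d`. -/
theorem stmt12 {B E : Type*}
    [NonUnitalCStarAlgebra B] [PartialOrder B] [StarOrderedRing B]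
    [NormedAddCommGroup E] [NormedSpace ℂ E] [SMul Bᵐᵒᵖ E] [CStarModuleRight B E]
    [CompleteSpace E]
    (hfull : (Submodule.span ℂ {b : B | ∃ x y : E, (inner B x y : B) = b}).topologicalClosure = ⊤)
    (D : Submodule ℂ E) (hdense : Dense (D : Set E)) (δ : D →ₗ[ℂ] E)
    (B₀ : NonUnitalSubalgebra ℂ B) (d : B₀ →ₗ[ℂ] B)
    (hleib : ∀ (b b' : B₀) (h : (b : B) * (b' : B) ∈ B₀),
      d ⟨(b : B) * (b' : B), h⟩ = d b * (b' : B) + (b : B) * d b')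
    (hmod : ∀ (x : D) (b : B₀), (x : E) <• (b : B) ∈ D)
    (hder : ∀ (x : D) (b : B₀),
      δ ⟨(x : E) <• (b : B), hmod x b⟩ = δ x <• (b : B) + (x : E) <• d b)
    (hclos : ∀ (x : ℕ → D) (e : E),
      Tendsto (fun n => (x n : E)) atTop (𝓝 0) →
      Tendsto (fun n => δ (x n)) atTop (𝓝 e) → e = 0) :
    ∀ (b : ℕ → B₀) (c : B),
      Tendsto (fun n => (b n : B)) atTop (𝓝 0) →
      Tendsto (fun n => d (b n)) atTop (𝓝 c) → c = 0 :=
  stmt12_general hfull D hdense δ B₀ d hmod hder hclos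
end

section
/- Characterization of inner ternary derivations: for α ∈ B^a(E) (adjointable operators on a Hilbert B-module E) and β ∈ B, the map δ(x) = αx − xβ is a ternary derivation of E if and only if (β + β*)⟨y,z⟩ = ⟨y, (α + α*)z⟩ for all y, z ∈ E. In particular, if α* = −α and β* = −β, then δ is a ternary derivation. -/
open scoped RightActions

/-- The Hilbert C⋆-module class as it stood in Mathlib of December 2024 (right `Aᵐᵒᵖ`-action),
kept here because Mathlib's `CStarModule` now uses a left action. -/
class CStarModuleOld (A E : Type*) [NonUnitalSemiring A] [StarRing A]
    [Module ℂ A] [AddCommGroup E] [Module ℂ E] [PartialOrder A] [SMul Aᵐᵒᵖ E] [Norm A] [Norm E]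
    extends Inner A E where
  inner_add_right {x} {y} {z} : inner x (y + z) = inner x y + inner x z
  inner_self_nonneg {x} : 0 ≤ inner x x
  inner_self {x} : inner x x = 0 ↔ x = 0
  inner_op_smul_right {a : A} {x y : E} : inner x (y <• a) = inner x y * a
  inner_smul_right_complex {z : ℂ} {x} {y} : inner x (z • y) = z • inner x y
  star_inner x y : star (inner x y) = inner y x
  norm_eq_sqrt_norm_inner_self x : ‖x‖ = √‖inner x x‖

/-!
Expanding both sides of the Leibniz rule with the `B`-sesquilinearity of the inner product, and
using that `α` commutes with the right action because it has an adjoint, the defect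
`δ(x⟨y,z⟩) - δx⟨y,z⟩ - x⟨δy,z⟩ - x⟨y,δz⟩` pairs with any `w` to `⟨w,x⟩ c`, where
`c = (β + β*)⟨y,z⟩ - ⟨y,(α + α*)z⟩`. So `δ` is a ternary derivation iff `⟨w,x⟩ c = 0` for all
`w, x`. Since `c` is itself a difference of two inner products, so is `c*`, whence `c* c = 0`
and `c = 0` by the C⋆-identity.
-/

namespace CStarModuleOld

section Algebra

variable {B E : Type*} [NonUnitalRing B] [StarRing B] [Module ℂ B] [PartialOrder B] [Norm B]
  [AddCommGroup E] [Module ℂ E] [SMul Bᵐᵒᵖ E] [Norm E] [CStarModuleOld B E]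

@[simp]
theorem inner_zero_right (x : E) : (inner B x (0 : E) : B) = 0 := by
  have h := inner_add_right (A := B) (x := x) (y := (0 : E)) (z := 0)
  rwa [add_zero, left_eq_add] at h

theorem inner_neg_right (x y : E) : (inner B x (-y) : B) = -inner B x y := by
  have h := inner_add_right (A := B) (x := x) (y := y) (z := -y)
  rw [add_neg_cancel, inner_zero_right] at h
  exact (neg_eq_of_add_eq_zero_right h.symm).symm

theorem inner_sub_right (x y z : E) : (inner B x (y - z) : B) = inner B x y - inner B x z := by
  rw [sub_eq_add_neg, inner_add_right, inner_neg_right, ← sub_eq_add_neg]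

theorem inner_sub_left (x y z : E) : (inner B (x - y) z : B) = inner B x z - inner B y z := by
  rw [← star_inner z, inner_sub_right, star_sub, star_inner, star_inner]

theorem inner_op_smul_left (a : B) (x y : E) :
    (inner B (x <• a) y : B) = star a * inner B x y := by
  rw [← star_inner y, inner_op_smul_right, star_mul, star_inner]

theorem ext_inner_left {u v : E} (h : ∀ w : E, (inner B w u : B) = inner B w v) : u = v := by
  refine sub_eq_zero.mp (inner_self (A := B) |>.mp ?_)
  rw [inner_sub_right, h, sub_self]

theorem map_op_smul_of_adjoint {α αadj : E →ₗ[ℂ] E}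
    (hadj : ∀ x y : E, (inner B (α x) y : B) = inner B x (αadj y)) (x : E) (b : B) :
    α (x <• b) = α x <• b := by
  refine ext_inner_left (B := B) fun w => ?_
  rw [← star_inner, hadj, inner_op_smul_left, star_mul, star_star, star_inner,
    inner_op_smul_right, ← star_inner x (αadj w), ← hadj, star_inner]

variable (B) in
def IsTernaryDerivation (δ : E → E) : Prop :=
  ∀ x y z : E, δ (x <• (inner B y z : B)) =
    δ x <• (inner B y z : B) + x <• (inner B (δ y) z : B) + x <• (inner B y (δ z) : B)

theorem inner_leibniz_defect {α αadj : E →ₗ[ℂ] E}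
    (hadj : ∀ x y : E, (inner B (α x) y : B) = inner B x (αadj y)) (β : B) (w x y z : E) :
    let δ := fun v : E => α v - v <• β
    (inner B w (δ (x <• (inner B y z : B))) : B)
        - inner B w (δ x <• (inner B y z : B) + x <• (inner B (δ y) z : B)
            + x <• (inner B y (δ z) : B))
      = (inner B w x : B) * ((β + star β) * (inner B y z : B) - inner B y (α z + αadj z)) := by
  simp only [map_op_smul_of_adjoint hadj, inner_sub_right, inner_sub_left, inner_add_right,
    inner_op_smul_right, inner_op_smul_left, hadj]
  noncomm_ring

end Algebra

variable {B E : Type*} [NonUnitalNormedRing B] [StarRing B] [CStarRing B] [Module ℂ B]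
  [PartialOrder B] [AddCommGroup E] [Module ℂ E] [SMul Bᵐᵒᵖ E] [Norm E] [CStarModuleOld B E]

theorem inner_eq_inner_of_forall_inner_mul_sub_eq_zero {p y z q : E}
    (h : ∀ w x : E, (inner B w x : B) * (inner B p z - inner B y q) = 0) :
    (inner B p z : B) = inner B y q := by
  set c : B := inner B p z - inner B y q
  have hc : star c * c = 0 := by
    rw [star_sub, star_inner, star_inner, sub_mul, h, h, sub_zero]
  exact sub_eq_zero.mp (CStarRing.star_mul_self_eq_zero_iff c |>.mp hc)

theorem isTernaryDerivation_iff {α αadj : E →ₗ[ℂ] E}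
    (hadj : ∀ x y : E, (inner B (α x) y : B) = inner B x (αadj y)) (β : B) :
    IsTernaryDerivation B (fun w : E => α w - w <• β) ↔
      ∀ y z : E, (β + star β) * (inner B y z : B) = inner B y (α z + αadj z) := by
  have hβ : star (β + star β) = β + star β := by rw [star_add, star_star, add_comm]
  constructor
  · intro hδ y z
    rw [← hβ, ← inner_op_smul_left]
    refine inner_eq_inner_of_forall_inner_mul_sub_eq_zero fun w x => ?_
    rw [inner_op_smul_left, hβ, ← inner_leibniz_defect hadj, hδ, sub_self]
  · intro h x y z
    refine ext_inner_left (B := B) fun w => sub_eq_zero.mp ?_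
    rw [inner_leibniz_defect hadj, h, sub_self, mul_zero]

end CStarModuleOld

theorem stmt17_general {B E : Type*}
    [NonUnitalCStarAlgebra B] [PartialOrder B]
    [NormedAddCommGroup E] [NormedSpace ℂ E] [SMul Bᵐᵒᵖ E] [CStarModuleOld B E]
    (α αadj : E →ₗ[ℂ] E)
    (hadj : ∀ x y : E, (inner B (α x) y : B) = inner B x (αadj y))
    (β : B) :
    ((∀ x y z : E,
      (fun w : E => α w - w <• β) (x <• (inner B y z : B)) =
        (fun w : E => α w - w <• β) x <• (inner B y z : B)
          + x <• (inner B ((fun w : E => α w - w <• β) y) z : B)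
          + x <• (inner B y ((fun w : E => α w - w <• β) z) : B)) ↔
      (∀ y z : E, (β + star β) * (inner B y z : B) = inner B y (α z + αadj z))) ∧
    ((∀ x : E, αadj x = -α x) → star β = -β →
      ∀ x y z : E,
        (fun w : E => α w - w <• β) (x <• (inner B y z : B)) =
          (fun w : E => α w - w <• β) x <• (inner B y z : B)
            + x <• (inner B ((fun w : E => α w - w <• β) y) z : B)
            + x <• (inner B y ((fun w : E => α w - w <• β) z) : B)) := by
  have hiff := CStarModuleOld.isTernaryDerivation_iff hadj β
  refine ⟨hiff, fun hα hβ => hiff.mpr fun y z => ?_⟩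
  rw [hβ, hα, add_neg_cancel, add_neg_cancel, zero_mul, CStarModuleOld.inner_zero_right]

/-- Characterization of inner generalized derivations `δ(x) = αx − xβ` (with `α` adjointable
with adjoint `αadj = α*`) that are ternary derivations; in particular `δ` is a ternary
derivation if `α` and `β` are skew-adjoint. -/
theorem stmt17 {B E : Type*}
    [NonUnitalCStarAlgebra B] [PartialOrder B] [StarOrderedRing B]
    [NormedAddCommGroup E] [NormedSpace ℂ E] [SMul Bᵐᵒᵖ E] [CStarModuleOld B E]
    [CompleteSpace E]
    (α αadj : E →ₗ[ℂ] E)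
    (hadj : ∀ x y : E, (inner B (α x) y : B) = inner B x (αadj y))
    (β : B) :
    ((∀ x y z : E,
      (fun w : E => α w - w <• β) (x <• (inner B y z : B)) =
        (fun w : E => α w - w <• β) x <• (inner B y z : B)
          + x <• (inner B ((fun w : E => α w - w <• β) y) z : B)
          + x <• (inner B y ((fun w : E => α w - w <• β) z) : B)) ↔
      (∀ y z : E, (β + star β) * (inner B y z : B) = inner B y (α z + αadj z))) ∧
    ((∀ x : E, αadj x = -α x) → star β = -β →
      ∀ x y z : E,
        (fun w : E => α w - w <• β) (x <• (inner B y z : B)) =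
          (fun w : E => α w - w <• β) x <• (inner B y z : B)
            + x <• (inner B ((fun w : E => α w - w <• β) y) z : B)
            + x <• (inner B y ((fun w : E => α w - w <• β) z) : B)) :=
  stmt17_general α αadj hadj β
end
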